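/- arXiv:2410.11313 — 2 statements merged into one kernel-verified Lean document; each statement's English description precedes it below -/
import Mathlib

section
/- Let G be a finite group, x ∈ G a rational element, and C the conjugacy class of x. Then every eigenvalue of the Cayley graph Cay(G, C ∪ C⁻¹) (equivalently Cay(G,C), since C is inverse-closed) is an integer; in particular, for each irreducible character χ of G, the value (|C|/χ(1)) · χ(x) is a rational integer. -/
open Finset
open scoped Classical

/-- A function `χ : G → ℂ` is an irreducible character of `G` if it is the character of a
simple (irreducible) finite-dimensional complex representation of `G`. -/
def IsIrrChar (G : Type) [Group G] (χ : G → ℂ) : Prop :=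
  ∃ V : FDRep ℂ G, CategoryTheory.Simple V ∧ χ = V.character

/-- An element `x` is rational if it is conjugate to `x ^ i` for every integer `i`
coprime to the order of `x`. -/
def IsRational {G : Type} [Group G] (x : G) : Prop :=
  ∀ i : ℤ, IsCoprime i (orderOf x : ℤ) → IsConj x (x ^ i)

/-- Real adjacency matrix of the Cayley graph `Cay(G, S)`: `u` and `v` are adjacent iff
`v = a * u` for some `a ∈ S`. -/
def cayAdjR (G : Type) [Group G] [DecidableEq G] (S : Finset G) : Matrix G G ℝ :=
  Matrix.of fun u v => if v * u⁻¹ ∈ S then 1 else 0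

/-- Complex adjacency matrix of the Cayley graph `Cay(G, S)`. -/
def cayAdjC (G : Type) [Group G] [DecidableEq G] (S : Finset G) : Matrix G G ℂ :=
  Matrix.of fun u v => if v * u⁻¹ ∈ S then 1 else 0

/-! Since `C` is closed under conjugation, its class sum commutes with the action of `G`, so it
acts as a scalar `c` on every irreducible representation and on every eigenspace of the
adjacency operator, which is the class sum in the right regular representation. Such a scalar
is an algebraic integer, because the `ℤ`-algebra generated by the image of a finite group is a
finitely generated `ℤ`-module, and taking traces gives `c · dim W = |C| · χ_W(x)`. The
eigenvalues of `ρ x` are powers of a primitive root of unity `ζ` of order `ord x`, so `χ_W(x)`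
lies in `ℚ(ζ)`; the automorphism `ζ ↦ ζ ^ i` sends it to `χ_W(x ^ i)`, which equals `χ_W(x)`
because `x` is rational. Hence `χ_W(x)`, and with it `c`, is rational, and a rational algebraic
integer is an integer. -/

open Polynomial Module IntermediateField

theorem IsPrimitiveRoot.aeval_mem_range_algebraMap_of_forall_coprime {L : Type*} [Field L]
    [CharZero L] {n : ℕ} [NeZero n] {ζ : L} (hζ : IsPrimitiveRoot ζ n) (P : ℚ[X])
    (hP : ∀ i, i.Coprime n → aeval (ζ ^ i) P = aeval ζ P) :
    aeval ζ P ∈ Set.range (algebraMap ℚ L) := by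
  have : IsCyclotomicExtension {n} ℚ ℚ⟮ζ⟯ := by
    -- `L` need not be algebraic over `ℚ`, so go through `Algebra.adjoin ℚ {ζ}`.
    change IsCyclotomicExtension {n} ℚ ℚ⟮ζ⟯.toSubalgebra
    rw [adjoin_simple_toSubalgebra_of_isAlgebraic
      (hζ.isIntegral (NeZero.pos n)).tower_top.isAlgebraic]
    exact hζ.adjoin_isCyclotomicExtension ℚ
  have := IsCyclotomicExtension.isGalois {n} ℚ ℚ⟮ζ⟯
  have := IsCyclotomicExtension.finiteDimensional {n} ℚ ℚ⟮ζ⟯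
  set y := AdjoinSimple.gen ℚ ζ
  have hy : IsPrimitiveRoot y n :=
    hζ.of_map_of_injective (f := ℚ⟮ζ⟯.val) Subtype.val_injective
  have hval (z : ℚ⟮ζ⟯) : (aeval z P : L) = aeval (z : L) P :=
    (aeval_algHom_apply ℚ⟮ζ⟯.val z P).symm
  have hfix (σ : Gal(ℚ⟮ζ⟯/ℚ)) : σ (aeval y P) = aeval y P := by
    obtain ⟨i, -, hi, hσ⟩ := hy.isPrimitiveRoot_iff.mp (hy.map_of_injective σ.injective)
    apply Subtype.val_injective
    rw [← aeval_algHom_apply, ← hσ, hval, hval]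
    exact hP i hi
  obtain ⟨q, hq⟩ := (IsGalois.mem_range_algebraMap_iff_fixed _).mpr hfix
  exact ⟨q, by rw [← AdjoinSimple.coe_gen ℚ ζ, ← hval, ← hq]; rfl⟩

theorem exists_intCast_eq_of_isIntegral_of_mem_range {L : Type*} [Field L] [CharZero L] {z : L}
    (hz : IsIntegral ℤ z) (hq : z ∈ Set.range (algebraMap ℚ L)) : ∃ m : ℤ, z = m := by
  obtain ⟨q, rfl⟩ := hq
  obtain ⟨m, hm⟩ := IsIntegrallyClosed.isIntegral_iff.mp
    ((isIntegral_algebraMap_iff (algebraMap ℚ L).injective).mp hz)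
  exact ⟨m, by rw [← hm]; simp⟩

theorem Module.End.isSemisimple_of_pow_eq_one {K V : Type*} [Field K] [AddCommGroup V]
    [Module K V] [FiniteDimensional K V] {f : End K V} {n : ℕ} (hn : (n : K) ≠ 0)
    (hf : f ^ n = 1) : f.IsSemisimple :=
  isSemisimple_of_squarefree_aeval_eq_zero (separable_X_pow_sub_C 1 hn one_ne_zero).squarefree
    (by simp [hf])

theorem Module.End.IsSemisimple.exists_trace_pow_eq_sum {K V : Type*} [Field K] [IsAlgClosed K]
    [AddCommGroup V] [Module K V] [FiniteDimensional K V] {f : End K V} (hf : f.IsSemisimple) :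
    ∃ s : Finset K, (∀ μ ∈ s, f.HasEigenvalue μ) ∧ ∀ i : ℕ,
      LinearMap.trace K V (f ^ i) = ∑ μ ∈ s, (finrank K (f.eigenspace μ) : K) * μ ^ i := by
  classical
  have hind := f.eigenspaces_iSupIndep
  have hfin : {μ | f.eigenspace μ ≠ ⊥}.Finite := WellFoundedGT.finite_ne_bot_of_iSupIndep hind
  have hint := DirectSum.isInternal_submodule_of_iSupIndep_of_iSup_eq_top hind
    hf.iSup_eigenspace_eq_top
  refine ⟨hfin.toFinset, fun μ hμ => hasEigenvalue_iff.mpr (by simpa using hμ), fun i => ?_⟩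
  have hmaps (μ : K) : Set.MapsTo (f ^ i) (f.eigenspace μ) (f.eigenspace μ) :=
    mapsTo_genEigenspace_of_comm ((Commute.refl f).pow_right i) μ 1
  rw [LinearMap.trace_eq_sum_trace_restrict' hint hfin hmaps]
  refine Finset.sum_congr rfl fun μ _ => ?_
  have : (f ^ i).restrict (hmaps μ) = μ ^ i • 1 := by
    rw [← pow_restrict i (mapsTo_genEigenspace_of_comm (Commute.refl f) μ 1),
      restrict_eigenspace, _root_.smul_pow, ← one_eq_id, one_pow]
  rw [this, map_smul, LinearMap.trace_one, smul_eq_mul, mul_comm]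

theorem Module.End.HasEigenvalue.pow_eq_one {K V : Type*} [Field K] [AddCommGroup V] [Module K V]
    {f : End K V} {μ : K} (hμ : f.HasEigenvalue μ) {n : ℕ} (hf : f ^ n = 1) : μ ^ n = 1 := by
  obtain ⟨v, hv⟩ := hμ.exists_hasEigenvector
  have := hv.pow_apply n
  rw [hf, one_apply] at this
  exact smul_left_injective K hv.2 (show μ ^ n • v = (1 : K) • v by rw [one_smul, ← this])

theorem IsRational.isConj_pow {G : Type} [Group G] {x : G} (hx : IsRational x) {i : ℕ}
    (hi : i.Coprime (orderOf x)) : IsConj x (x ^ i) := by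
  simpa using hx i (Nat.isCoprime_iff_coprime.mpr hi)

theorem conj_mem_of_forall_mem_iff_isConj {G : Type} [Group G] {x : G} {C : Finset G}
    (hC : ∀ g, g ∈ C ↔ IsConj x g) (g : G) : ∀ a ∈ C, g * a * g⁻¹ ∈ C := fun a ha =>
  (hC _).mpr (((hC a).mp ha).trans (isConj_iff.mpr ⟨g, rfl⟩))

theorem MonoidHom.isIntegral_sum_apply {G A : Type*} [Monoid G] [Finite G] [Ring A]
    (ρ : G →* A) (S : Finset G) : IsIntegral ℤ (∑ a ∈ S, ρ a) := by
  have hfg : (Subalgebra.toSubmodule (Algebra.adjoin ℤ (Set.range ρ))).FG := by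
    rw [Algebra.adjoin_eq_span, ← MonoidHom.coe_mrange, Submonoid.closure_eq,
      MonoidHom.coe_mrange]
    exact Submodule.fg_span (Set.finite_range ρ)
  exact .of_mem_of_fg _ hfg _
    (Subalgebra.sum_mem _ fun a _ => Algebra.subset_adjoin (Set.mem_range_self a))

theorem MonoidHom.commute_sum_apply_of_conj_mem {G A : Type*} [Group G] [Semiring A]
    (ρ : G →* A) {S : Finset G} (hS : ∀ g, ∀ a ∈ S, g * a * g⁻¹ ∈ S) (g : G) :
    Commute (ρ g) (∑ a ∈ S, ρ a) := by
  have hconj : ∑ a ∈ S, ρ (g * a * g⁻¹) = ∑ a ∈ S, ρ a :=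
    Finset.sum_nbij' (fun a => g * a * g⁻¹) (fun a => g⁻¹ * a * g) (hS g)
      (fun a ha => by simpa using hS g⁻¹ a ha) (fun a _ => by group) (fun a _ => by group)
      (fun _ _ => rfl)
  rw [Commute, SemiconjBy, Finset.mul_sum, ← hconj, Finset.sum_mul]
  simp only [← map_mul, inv_mul_cancel_right]

namespace Representation

variable {G : Type} [Group G] {W : Type*} [AddCommGroup W] [Module ℂ W]

theorem character_eq_of_isConj (ρ : Representation ℂ G W) {g h : G} (hgh : IsConj g h) :
    ρ.character g = ρ.character h := by
  obtain ⟨c, rfl⟩ := isConj_iff.mp hgh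
  exact (ρ.char_conj g c).symm

theorem trace_sum_eq_card_mul_character (ρ : Representation ℂ G W) {x : G} {S : Finset G}
    (hS : ∀ a ∈ S, IsConj x a) :
    LinearMap.trace ℂ W (∑ a ∈ S, ρ a) = S.card * ρ.character x := by
  rw [map_sum]
  change ∑ a ∈ S, ρ.character a = _
  rw [Finset.sum_congr rfl fun a ha => (ρ.character_eq_of_isConj (hS a ha)).symm,
    Finset.sum_const, nsmul_eq_mul]

theorem card_mul_character_eq_of_sum_eq_smul_one [FiniteDimensional ℂ W]
    (ρ : Representation ℂ G W) {x : G} {C : Finset G} (hC : ∀ a ∈ C, IsConj x a) {c : ℂ}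
    (hc : ∑ a ∈ C, ρ a = c • 1) :
    C.card * ρ.character x = c * finrank ℂ W := by
  rw [← ρ.trace_sum_eq_card_mul_character hC, hc, map_smul, LinearMap.trace_one, smul_eq_mul]

variable [Finite G] [FiniteDimensional ℂ W]

theorem character_mem_range_algebraMap_of_isRational (ρ : Representation ℂ G W) {x : G}
    (hx : IsRational x) : ρ.character x ∈ Set.range (algebraMap ℚ ℂ) := by
  set n := orderOf x
  have : NeZero n := ⟨(orderOf_pos x).ne'⟩
  have hζ := Complex.isPrimitiveRoot_exp n (NeZero.ne n)
  set ζ := Complex.exp (2 * Real.pi * Complex.I / n)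
  have hpow : ρ x ^ n = 1 := by rw [← map_pow, pow_orderOf_eq_one, map_one]
  obtain ⟨s, heig, htr⟩ :=
    (Module.End.isSemisimple_of_pow_eq_one (NeZero.ne _) hpow).exists_trace_pow_eq_sum
  have hroot (μ : ℂ) (hμ : μ ∈ s) : ∃ k, ζ ^ k = μ := by
    obtain ⟨k, -, hk⟩ := hζ.eq_pow_of_pow_eq_one ((heig μ hμ).pow_eq_one hpow)
    exact ⟨k, hk⟩
  choose! k hk using hroot
  set P : ℚ[X] := ∑ μ ∈ s, C (finrank ℂ (Module.End.eigenspace (ρ x) μ) : ℚ) * X ^ k μ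
  have hP (i : ℕ) : aeval (ζ ^ i) P = ρ.character (x ^ i) := by
    rw [character, map_pow, htr i]
    simp only [P, map_sum, map_mul, aeval_C, aeval_X_pow]
    refine Finset.sum_congr rfl fun μ hμ => ?_
    rw [← pow_mul, mul_comm i, pow_mul, hk μ hμ, map_natCast, mul_comm]
  have hP1 := hP 1
  rw [pow_one, pow_one] at hP1
  rw [← hP1]
  refine hζ.aeval_mem_range_algebraMap_of_forall_coprime P fun i hi => ?_
  rw [hP, hP1, ρ.character_eq_of_isConj (hx.isConj_pow hi)]

theorem exists_intCast_eq_of_sum_eq_smul_one [Nontrivial W] (ρ : Representation ℂ G W)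
    {x : G} (hx : IsRational x) {C : Finset G} (hC : ∀ g, g ∈ C ↔ IsConj x g) {c : ℂ}
    (hc : ∑ a ∈ C, ρ a = c • 1) : ∃ m : ℤ, c = m := by
  refine exists_intCast_eq_of_isIntegral_of_mem_range ?_ ?_
  · have : IsIntegral ℤ (algebraMap ℂ (Module.End ℂ W) c) := by
      rw [Algebra.algebraMap_eq_smul_one, ← hc]
      exact ρ.isIntegral_sum_apply C
    exact (isIntegral_algebraMap_iff (algebraMap ℂ (Module.End ℂ W)).injective).mp this
  · obtain ⟨q, hq⟩ := ρ.character_mem_range_algebraMap_of_isRational hx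
    have hd : (finrank ℂ W : ℂ) ≠ 0 := Nat.cast_ne_zero.mpr Module.finrank_pos.ne'
    refine ⟨C.card * q / finrank ℂ W, ?_⟩
    rw [map_div₀, map_mul, hq, map_natCast, map_natCast,
      ρ.card_mul_character_eq_of_sum_eq_smul_one (fun a ha => (hC a).mp ha) hc,
      mul_div_cancel_right₀ _ hd]

theorem exists_intCast_eq_of_hasEigenvalue_sum (ρ : Representation ℂ G W) {x : G}
    (hx : IsRational x) {C : Finset G} (hC : ∀ g, g ∈ C ↔ IsConj x g) {η : ℂ}
    (hη : Module.End.HasEigenvalue (∑ a ∈ C, ρ a) η) : ∃ m : ℤ, η = m := by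
  set E := Module.End.eigenspace (∑ a ∈ C, ρ a) η
  have hE (g : G) : E ≤ E.comap (ρ g) :=
    Module.End.mapsTo_genEigenspace_of_comm
      (ρ.commute_sum_apply_of_conj_mem (conj_mem_of_forall_mem_iff_isConj hC) g).symm η 1
  have : Nontrivial E := Submodule.nontrivial_iff_ne_bot.mpr hη
  refine (ρ.subrepresentation E hE).exists_intCast_eq_of_sum_eq_smul_one hx hC ?_
  ext ⟨v, hv⟩
  simpa [LinearMap.coe_sum, Submodule.coe_sum] using Module.End.mem_eigenspace_iff.mp hv

end Representation

open TannakaDuality.FiniteGroup in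
/-- Because `C` is closed under conjugation, `v * u⁻¹ ∈ C ↔ u⁻¹ * v ∈ C`: the neighbours of `u`
are the `u * a`, `a ∈ C`. -/
theorem Matrix.toLin'_cayAdjC {G : Type} [Group G] [Fintype G] [DecidableEq G] {C : Finset G}
    (hC : ∀ g, ∀ a ∈ C, g * a * g⁻¹ ∈ C) :
    Matrix.toLin' (cayAdjC G C) = ∑ a ∈ C, rightRegular a := by
  refine LinearMap.ext fun f => funext fun u => ?_
  have hmem (a : G) : u * a * u⁻¹ ∈ C ↔ a ∈ C :=
    ⟨fun h => by simpa [mul_assoc] using hC u⁻¹ _ h, hC u a⟩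
  rw [Matrix.toLin'_apply, LinearMap.coe_sum, Finset.sum_apply, Finset.sum_apply]
  simp only [rightRegular_apply, Matrix.mulVec, dotProduct, cayAdjC, Matrix.of_apply]
  rw [← Equiv.sum_comp (Equiv.mulLeft u)]
  simp [hmem, Finset.sum_ite_mem]

theorem Matrix.hasEigenvalue_toLin'_of_mem_spectrum {n : Type*} [Fintype n] [DecidableEq n]
    {A : Matrix n n ℂ} {η : ℂ} (h : η ∈ spectrum ℂ A) :
    Module.End.HasEigenvalue (Matrix.toLin' A) η := by
  rw [← AlgEquiv.spectrum_eq Matrix.toLinAlgEquiv'] at h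
  exact Module.End.hasEigenvalue_iff_mem_spectrum.mpr h

namespace FDRep

open CategoryTheory

variable {k G : Type} [Field k] [Monoid G] (V : FDRep k G) [Simple V]

theorem nontrivial_of_simple : Nontrivial V := by
  by_contra h
  rw [not_nontrivial_iff_subsingleton] at h
  exact id_nonzero V (by ext v; exact Subsingleton.elim _ _)

theorem exists_eq_smul_one_of_forall_commute [IsAlgClosed k] {T : Module.End k V}
    (hT : ∀ g, Commute (V.ρ g) T) : ∃ c : k, T = c • 1 := by
  let f : V ⟶ V := ⟨FGModuleCat.ofHom T, fun g => by ext v; exact congrArg (· v) (hT g).symm⟩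
  obtain ⟨c, hc⟩ := endomorphism_simple_eq_smul_id k f
  exact ⟨c, LinearMap.ext fun v => (congrArg (fun φ : V ⟶ V => φ.hom.hom v) hc).symm⟩

end FDRep

theorem rational_cayley_integral_eigenvalues {G : Type} [Group G] [Fintype G] [DecidableEq G]
    (x : G) (hrat : IsRational x)
    (C : Finset G) (hC : ∀ g, g ∈ C ↔ IsConj x g)
    (Irr : Finset (G → ℂ)) (hIrr : ∀ χ, χ ∈ Irr ↔ IsIrrChar G χ) :
    (∀ η ∈ spectrum ℂ (cayAdjC G C), ∃ m : ℤ, η = m) ∧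
    ∀ χ ∈ Irr, ∃ m : ℤ, (C.card : ℂ) / χ 1 * χ x = m := by
  have hCconj := conj_mem_of_forall_mem_iff_isConj hC
  constructor
  · intro η hη
    have hη' := Matrix.hasEigenvalue_toLin'_of_mem_spectrum hη
    rw [Matrix.toLin'_cayAdjC hCconj] at hη'
    exact TannakaDuality.FiniteGroup.rightRegular.exists_intCast_eq_of_hasEigenvalue_sum
      hrat hC hη'
  · intro χ hχ
    obtain ⟨V, hV, rfl⟩ := (hIrr χ).mp hχ
    have := V.nontrivial_of_simple
    obtain ⟨c, hc⟩ :=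
      V.exists_eq_smul_one_of_forall_commute (V.ρ.commute_sum_apply_of_conj_mem hCconj)
    obtain ⟨m, rfl⟩ := Representation.exists_intCast_eq_of_sum_eq_smul_one V.ρ hrat hC hc
    refine ⟨m, ?_⟩
    rw [FDRep.char_one, div_mul_eq_mul_div,
      div_eq_iff (Nat.cast_ne_zero.mpr Module.finrank_pos.ne')]
    exact Representation.card_mul_character_eq_of_sum_eq_smul_one V.ρ (fun a ha => (hC a).mp ha) hc
end

section
/- Let G be a finite group and x ∈ G a non-vanishing element whose conjugacy class C is closed under inversion and all of whose associated character values χ(x) are rational. Then the adjacency matrix of the normal Cayley graph Cay(G,C) is non-singular. -/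
open Finset
open scoped Classical

/-!
The class sum `c = ∑ a ∈ C, a` is central in `ℂ[G]`, and the adjacency matrix of `Cay(G, C)`
is the transposed matrix of left multiplication by `c`. If `c` killed a nonzero `v`, its
annihilator would be a nonzero left ideal of the semisimple ring `ℂ[G]`, hence would contain a
simple left ideal `S`. Then `c` acts by zero on the irreducible representation `S`, whose
character `χ` therefore satisfies `#C * χ x = tr (c ∣ S) = 0`, contradicting `χ x ≠ 0`.
-/

open CategoryTheory MonoidAlgebra Representation
open scoped MonoidAlgebra

universe u

theorem FDRep.simple_of_isIrreducible {k G V : Type u} [Field k] [IsAlgClosed k] [Group G]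
    [Finite G] [NeZero (Nat.card G : k)] [AddCommGroup V] [Module k V] [FiniteDimensional k V]
    (ρ : Representation k G V) [ρ.IsIrreducible] : Simple (FDRep.of ρ) := by
  rw [FDRep.simple_iff_end_is_rank_one, ← (FDRep.forget₂HomLinearEquiv _ _).finrank_eq,
    (Rep.homLinearEquiv _ _).finrank_eq]
  exact IsIrreducible.finrank_intertwiningMap_self ρ

namespace Representation

section ofModule'

variable {k G M : Type*} [CommSemiring k] [Monoid G] [AddCommMonoid M] [Module k M]
  [Module k[G] M] [IsScalarTower k k[G] M]

theorem asAlgebraHom_ofModule' :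
    (ofModule' (k := k) (G := G) M).asAlgebraHom = Algebra.lsmul k k M :=
  (MonoidAlgebra.lift k _ G).apply_symm_apply _

noncomputable def asModuleEquivOfModule' :
    (ofModule' (k := k) (G := G) M).asModule ≃ₗ[k[G]] M where
  __ := (ofModule' M).asModuleEquiv
  map_smul' r x := by simp [asModuleEquiv_map_smul, asAlgebraHom_ofModule']

end ofModule'

theorem isIrreducible_ofModule' {k G M : Type*} [Field k] [Monoid G] [AddCommGroup M]
    [Module k M] [Module k[G] M] [IsScalarTower k k[G] M] [IsSimpleModule k[G] M] :
    (ofModule' (k := k) (G := G) M).IsIrreducible :=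
  (irreducible_iff_isSimpleModule_asModule _).2 (IsSimpleModule.congr asModuleEquivOfModule')

end Representation

namespace MonoidAlgebra

variable {k G : Type*} [Semiring k] [Group G]

noncomputable def classSum (C : Finset G) : k[G] := ∑ a ∈ C, single a 1

theorem classSum_mul_comm {C : Finset G} (hC : ∀ a ∈ C, ∀ h : G, h * a * h⁻¹ ∈ C)
    (r : k[G]) : classSum C * r = r * classSum C := by
  induction r using MonoidAlgebra.induction_linear with
  | zero => simp
  | add r s hr hs => rw [mul_add, add_mul, hr, hs]
  | single g b =>
    simp only [classSum, sum_mul, mul_sum, single_mul_single, one_mul, mul_one]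
    refine sum_equiv (MulAut.conj g⁻¹).toEquiv (fun a => ?_) (by simp [mul_assoc])
    exact ⟨fun ha => by simpa using hC a ha g⁻¹,
      fun ha => by simpa [mul_assoc] using hC _ ha g⟩

end MonoidAlgebra

namespace FDRep

theorem sum_character_eq_card_mul {k : Type u} {G : Type*} [Field k] [Group G] (V : FDRep k G)
    {x : G} {C : Finset G} (hC : ∀ g, g ∈ C ↔ IsConj x g) :
    ∑ a ∈ C, V.character a = #C * V.character x := by
  rw [sum_congr rfl fun a ha => ?_, sum_const, nsmul_eq_mul]
  obtain ⟨h, rfl⟩ := isConj_iff.1 ((hC a).1 ha)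
  exact V.char_conj x h

theorem sum_character_ofModule' {k M : Type u} {G : Type*} [Field k] [Group G] [AddCommGroup M]
    [Module k M] [Module k[G] M] [IsScalarTower k k[G] M] [FiniteDimensional k M]
    (C : Finset G) :
    ∑ a ∈ C, (FDRep.of (ofModule' (k := k) (G := G) M)).character a =
      LinearMap.trace k M (Algebra.lsmul k k M (classSum C : k[G])) := by
  simp only [FDRep.character, FDRep.of_ρ', ← asAlgebraHom_single_one, ← map_sum, classSum,
    asAlgebraHom_ofModule']

theorem exists_simple_sum_character_eq_zero {k G M : Type u} [Field k] [IsAlgClosed k]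
    [Group G] [Finite G] [NeZero (Nat.card G : k)] [AddCommGroup M] [Module k M] [Module k[G] M]
    [IsScalarTower k k[G] M] [FiniteDimensional k M] [IsSimpleModule k[G] M] {C : Finset G}
    (hC : ∀ m : M, (classSum C : k[G]) • m = 0) :
    ∃ V : FDRep k G, Simple V ∧ ∑ a ∈ C, V.character a = 0 := by
  have := isIrreducible_ofModule' (k := k) (G := G) (M := M)
  refine ⟨_, simple_of_isIrreducible (ofModule' M), ?_⟩
  rw [sum_character_ofModule', show Algebra.lsmul k k M (classSum C) = 0 from LinearMap.ext hC,
    map_zero]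

end FDRep

theorem IsSemisimpleRing.mul_left_injective_of_forall_isSimpleModule {A : Type*} [Ring A]
    [IsSemisimpleRing A] {z : A} (hz : ∀ r, z * r = r * z)
    (h : ∀ S : Submodule A A, IsSimpleModule A S → ∃ s ∈ S, z * s ≠ 0) :
    Function.Injective (z * ·) := by
  refine (injective_iff_map_eq_zero (AddMonoidHom.mulLeft z)).2 fun v hv => ?_
  -- by centrality, the annihilator of `z` is the left ideal `ker (r ↦ r * z)`
  set K := LinearMap.ker (LinearMap.toSpanSingleton A A z)
  rcases IsSemisimpleModule.eq_bot_or_exists_simple_le K with hbot | ⟨S, hSK, hS⟩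
  · simpa [hbot] using (show v ∈ K by simpa [K, ← hz] using hv)
  · obtain ⟨s, hs, hzs⟩ := h S hS
    exact (hzs (by simpa [K, hz] using hSK hs)).elim

theorem toMatrix_mulLeft_classSum {G : Type} [Group G] [Fintype G] [DecidableEq G]
    (C : Finset G) :
    LinearMap.toMatrix (MonoidAlgebra.basis G ℂ) (MonoidAlgebra.basis G ℂ)
      (LinearMap.mulLeft ℂ (classSum C : ℂ[G])) = (cayAdjC G C).transpose := by
  ext i j
  rw [LinearMap.toMatrix_apply]
  change ((classSum C : ℂ[G]) * single j 1).coeff i = _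
  simp [coeff_mul_single_apply, classSum, cayAdjC, Finsupp.single_apply]

theorem nonvanishing_adjacency_nonsingular_general {G : Type} [Group G] [Fintype G] [DecidableEq G]
    (x : G)
    (Irr : Finset (G → ℂ)) (hIrr : ∀ χ, χ ∈ Irr ↔ IsIrrChar G χ)
    (hnv : ∀ χ ∈ Irr, χ x ≠ 0)
    (C : Finset G) (hC : ∀ g, g ∈ C ↔ IsConj x g) :
    (cayAdjC G C).det ≠ 0 := by
  have hcentral : ∀ r : ℂ[G], classSum C * r = r * classSum C :=
    classSum_mul_comm fun a ha h => (hC _).2 (((hC a).1 ha).trans (isConj_iff.2 ⟨h, rfl⟩))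
  have hsimple (S : Submodule ℂ[G] ℂ[G]) [IsSimpleModule ℂ[G] S] :
      ∃ s ∈ S, classSum C * s ≠ 0 := by
    by_contra! hS
    obtain ⟨V, hV, hsum⟩ := FDRep.exists_simple_sum_character_eq_zero (M := S) (C := C)
      fun s => Subtype.ext ((Submodule.coe_smul _ _).trans (hS s s.2))
    rw [V.sum_character_eq_card_mul hC, mul_eq_zero, Nat.cast_eq_zero,
      card_eq_zero, ← not_nonempty_iff_eq_empty] at hsum
    exact hsum.elim (· ⟨x, (hC x).2 (IsConj.refl x)⟩) (hnv _ ((hIrr _).2 ⟨V, hV, rfl⟩))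
  rw [← Matrix.det_transpose, ← toMatrix_mulLeft_classSum, LinearMap.det_toMatrix, Ne,
    LinearMap.det_eq_zero_iff_ker_ne_bot, not_not, LinearMap.ker_eq_bot]
  exact IsSemisimpleRing.mul_left_injective_of_forall_isSimpleModule hcentral hsimple

theorem nonvanishing_adjacency_nonsingular {G : Type} [Group G] [Fintype G] [DecidableEq G]
    (x : G)
    (Irr : Finset (G → ℂ)) (hIrr : ∀ χ, χ ∈ Irr ↔ IsIrrChar G χ)
    (hnv : ∀ χ ∈ Irr, χ x ≠ 0)
    (hratval : ∀ χ ∈ Irr, ∃ q : ℚ, χ x = q)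
    (C : Finset G) (hC : ∀ g, g ∈ C ↔ IsConj x g) (hinv : ∀ g ∈ C, g⁻¹ ∈ C) :
    (cayAdjC G C).det ≠ 0 :=
  nonvanishing_adjacency_nonsingular_general x Irr hIrr hnv C hC
end
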